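/- arXiv:2602.01428 — 9 statements merged into one kernel-verified Lean document; each statement's English description precedes it below -/
import Mathlib

section
/- Under the unbiasedness condition E_ζ[P_ζ] = P on a finite set W, the watermark strength E_ζ[KL(P_ζ || P)] is at most Ent(P), with equality if and only if Ent(P_ζ) = 0 almost surely (i.e., P_ζ is a point mass almost surely). -/
open MeasureTheory
open scoped BigOperators

/-- Shannon entropy of a distribution on a finite set. -/
noncomputable def Ent {W : Type*} [Fintype W] (P : W → ℝ) : ℝ :=
  -∑ w, P w * Real.log (P w)

/-- Kullback–Leibler divergence between two distributions on a finite set. -/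
noncomputable def KL {W : Type*} [Fintype W] (P Q : W → ℝ) : ℝ :=
  ∑ w, P w * Real.log (P w / Q w)

lemma ent_nonneg {W : Type*} [Fintype W] (P : W → ℝ)
    (h0 : ∀ w, 0 ≤ P w) (h1 : ∑ w, P w = 1) : 0 ≤ Ent P := by
  have : ∀ w, P w * Real.log (P w) ≤ 0 := by
    intro w
    have hle : P w ≤ 1 := by
      rw [← h1]
      exact Finset.single_le_sum (fun i _ => h0 i) (Finset.mem_univ w)
    exact mul_nonpos_of_nonneg_of_nonpos (h0 w) (Real.log_nonpos (h0 w) hle)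
  have hs : ∑ w, P w * Real.log (P w) ≤ 0 :=
    Finset.sum_nonpos (fun w _ => this w)
  simp only [Ent]
  linarith

/-- Under unbiasedness, the watermark strength `E_ζ[KL(P_ζ ‖ P)]` is at most `Ent P`,
with equality iff `Ent (P_ζ) = 0` almost surely. -/
theorem stmt1 {W : Type*} [Fintype W] {Ω : Type*} [MeasurableSpace Ω]
    (μ : Measure Ω) [IsProbabilityMeasure μ]
    (P : W → ℝ) (Pz : Ω → W → ℝ)
    (hP0 : ∀ w, 0 ≤ P w) (hP1 : ∑ w, P w = 1)
    (hPz0 : ∀ ω w, 0 ≤ Pz ω w) (hPz1 : ∀ ω, ∑ w, Pz ω w = 1)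
    (hmeas : ∀ w, Measurable fun ω => Pz ω w)
    (hKLint : Integrable (fun ω => KL (Pz ω) P) μ)
    (hEntint : Integrable (fun ω => Ent (Pz ω)) μ)
    (hunb : ∀ w, ∫ ω, Pz ω w ∂μ = P w) :
    (∫ ω, KL (Pz ω) P ∂μ ≤ Ent P) ∧
      ((∫ ω, KL (Pz ω) P ∂μ = Ent P) ↔ (∀ᵐ ω ∂μ, Ent (Pz ω) = 0)) := by
  classical
  -- integrability of each coordinate
  have hintw : ∀ w, Integrable (fun ω => Pz ω w) μ := by
    intro w
    refine Integrable.mono' (integrable_const (1 : ℝ))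
      (hmeas w).aestronglyMeasurable ?_
    filter_upwards with ω
    rw [Real.norm_eq_abs, abs_of_nonneg (hPz0 ω w)]
    rw [← hPz1 ω]
    exact Finset.single_le_sum (fun i _ => hPz0 ω i) (Finset.mem_univ w)
  -- a.e., coordinates with P w = 0 vanish
  have hzero : ∀ᵐ ω ∂μ, ∀ w, P w = 0 → Pz ω w = 0 := by
    rw [MeasureTheory.ae_all_iff]
    intro w
    by_cases hw : P w = 0
    · have hI : ∫ ω, Pz ω w ∂μ = 0 := by rw [hunb w, hw]
      have := (MeasureTheory.integral_eq_zero_iff_of_nonneg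
        (fun ω => hPz0 ω w) (hintw w)).mp hI
      filter_upwards [this] with ω hω _
      simpa using hω
    · filter_upwards with ω h; exact absurd h hw
  -- a.e. pointwise decomposition of KL
  have hdecomp : ∀ᵐ ω ∂μ,
      KL (Pz ω) P = -Ent (Pz ω) - ∑ w, Pz ω w * Real.log (P w) := by
    filter_upwards [hzero] with ω hω
    simp only [KL, Ent, neg_neg, ← Finset.sum_sub_distrib]
    apply Finset.sum_congr rfl
    intro w _
    by_cases hpz : Pz ω w = 0
    · simp [hpz]
    · have hPw : P w ≠ 0 := fun h => hpz (hω w h)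
      rw [Real.log_div hpz hPw]
      ring
  -- integrability of the cross term
  have hcrossint : Integrable (fun ω => ∑ w, Pz ω w * Real.log (P w)) μ :=
    MeasureTheory.integrable_finset_sum _ (fun w _ => (hintw w).mul_const _)
  have hcross : ∫ ω, (∑ w, Pz ω w * Real.log (P w)) ∂μ = -Ent P := by
    rw [MeasureTheory.integral_finset_sum _ (fun w _ => (hintw w).mul_const _)]
    simp only [MeasureTheory.integral_mul_const, hunb, Ent, neg_neg]
  -- key identity
  have hkey : ∫ ω, KL (Pz ω) P ∂μ = Ent P - ∫ ω, Ent (Pz ω) ∂μ := by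
    have hnegint : Integrable (fun ω => -Ent (Pz ω)) μ := hEntint.neg
    rw [MeasureTheory.integral_congr_ae hdecomp,
      MeasureTheory.integral_sub hnegint hcrossint,
      MeasureTheory.integral_neg, hcross]
    ring
  have hEntnn : ∀ ω, 0 ≤ Ent (Pz ω) := fun ω =>
    ent_nonneg _ (hPz0 ω) (hPz1 ω)
  have hIEnn : 0 ≤ ∫ ω, Ent (Pz ω) ∂μ :=
    MeasureTheory.integral_nonneg hEntnn
  constructor
  · rw [hkey]; linarith
  · rw [hkey]
    constructor
    · intro h
      have : ∫ ω, Ent (Pz ω) ∂μ = 0 := by linarith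
      exact (MeasureTheory.integral_eq_zero_iff_of_nonneg hEntnn hEntint).mp this
    · intro h
      have : ∫ ω, Ent (Pz ω) ∂μ = 0 := by
        rw [MeasureTheory.integral_congr_ae h]; simp
      rw [this]; ring
end

section
/- The SynthID tournament operator is unbiased: for a probability distribution P on a finite set W and a random binary vector g = (g_w)_{w∈W} with entries i.i.d. Bernoulli(1/2), define (T_g(P))(w) = P(w)·(1 + g_w − Σ_{w': g_{w'}=1} P(w')). Then E_g[T_g(P)] = P. -/
open scoped BigOperators

/-- The SynthID tournament operator: `(T_g(P))(w) = P(w) · (1 + g_w − Σ_{w' : g_{w'}=1} P(w'))`. -/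
noncomputable def Tg {W : Type*} [Fintype W] (g : W → Bool) (P : W → ℝ) : W → ℝ :=
  fun w => P w * (1 + (if g w then (1 : ℝ) else 0) - ∑ w', if g w' then P w' else 0)

/-- Unbiasedness of the SynthID tournament operator: averaging `T_g(P)` over `g` with
i.i.d. Bernoulli(1/2) coordinates (i.e. `g` uniform over `{0,1}^W`) recovers `P`. -/
theorem stmt3 {W : Type*} [Fintype W] [DecidableEq W]
    (P : W → ℝ) (hP0 : ∀ w, 0 ≤ P w) (hP1 : ∑ w, P w = 1) (w : W) :
    (∑ g : W → Bool, Tg g P w) / (Fintype.card (W → Bool) : ℝ) = P w := by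
  classical
  set N : ℝ := (Fintype.card (W → Bool) : ℝ) with hN
  have hNpos : (0:ℝ) < N := by positivity
  -- key lemma: half of the g's have g v = true
  have key : ∀ v : W, ∑ g : W → Bool, (if g v then (1:ℝ) else 0) = N / 2 := by
    intro v
    have hsum : (∑ g : W → Bool, (if g v then (1:ℝ) else 0))
        + (∑ g : W → Bool, (if g v then (0:ℝ) else 1)) = N := by
      rw [← Finset.sum_add_distrib]
      have : ∀ g : W → Bool,
          (if g v then (1:ℝ) else 0) + (if g v then (0:ℝ) else 1) = 1 := by
        intro g; by_cases h : g v <;> simp [h]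
      simp [this, hN]
    have heq : (∑ g : W → Bool, (if g v then (1:ℝ) else 0))
        = ∑ g : W → Bool, (if g v then (0:ℝ) else 1) := by
      refine Fintype.sum_equiv
        ⟨fun g => Function.update g v (!g v), fun g => Function.update g v (!g v),
         ?_, ?_⟩ _ _ ?_
      · intro g; funext x
        by_cases h : x = v <;> simp [Function.update, h]
      · intro g; funext x
        by_cases h : x = v <;> simp [Function.update, h]
      · intro g
        simp only [Equiv.coe_fn_mk, Function.update_self]
        by_cases h : g v <;> simp [h]
    linarith
  have expand : ∑ g : W → Bool, Tg g P w = P w * N := by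
    simp only [Tg, mul_sub, mul_add, mul_one]
    rw [Finset.sum_sub_distrib, Finset.sum_add_distrib]
    have h1 : ∑ _g : W → Bool, P w = P w * N := by
      simp [hN, mul_comm]
    have h2 : ∑ g : W → Bool, P w * (if g w then (1:ℝ) else 0) = P w * (N / 2) := by
      rw [← Finset.mul_sum, key w]
    have h3 : ∑ g : W → Bool, P w * (∑ w', if g w' then P w' else 0)
        = P w * (N / 2) := by
      rw [← Finset.mul_sum]
      congr 1
      rw [Finset.sum_comm]
      have : ∀ w' : W, ∑ g : W → Bool, (if g w' then P w' else 0) = P w' * (N / 2) := by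
        intro w'
        have : ∀ g : W → Bool, (if g w' then P w' else 0)
            = P w' * (if g w' then (1:ℝ) else 0) := by
          intro g; by_cases h : g w' <;> simp [h]
        rw [Finset.sum_congr rfl (fun g _ => this g), ← Finset.mul_sum, key w']
      rw [Finset.sum_congr rfl (fun w' _ => this w'), ← Finset.sum_mul, hP1, one_mul]
    rw [h1, h2, h3]; ring
  rw [expand, mul_div_assoc, div_self (ne_of_gt hNpos), mul_one]
end

section
/- A probability distribution P on a finite set W is a fixed point of the SynthID tournament operator T_g for every binary vector g ∈ {0,1}^W if and only if P is degenerate (a point mass on a single element). -/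
open scoped BigOperators

/-- A distribution `P` on a finite set with at least two elements is a fixed point of
every SynthID tournament operator `T_g` iff it is degenerate (a point mass). -/
theorem stmt5 {W : Type*} [Fintype W] [DecidableEq W]
    (hcard : 2 ≤ Fintype.card W)
    (P : W → ℝ) (hP0 : ∀ w, 0 ≤ P w) (hP1 : ∑ w, P w = 1) :
    (∀ g : W → Bool, ∀ w, Tg g P w = P w) ↔
      ∃ w0 : W, ∀ w, P w = if w = w0 then 1 else 0 := by
  constructor
  · intro h
    have key : ∀ w, P w = 0 ∨ P w = 1 := by
      intro w
      have hg := h (fun w' => decide (w' = w)) w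
      simp only [Tg, decide_eq_true_eq] at hg
      have hsum : (∑ w', if w' = w then P w' else 0) = P w := by
        simp [Finset.sum_ite_eq']
      rw [hsum] at hg
      norm_num at hg
      have : P w * (1 - P w) = 0 := by nlinarith
      rcases mul_eq_zero.1 this with h0 | h1
      · exact Or.inl h0
      · exact Or.inr (by linarith)
    have hex : ∃ w0, P w0 = 1 := by
      by_contra hc
      push_neg at hc
      have : ∀ w ∈ Finset.univ, P w = 0 := fun w _ =>
        (key w).resolve_right (hc w)
      rw [Finset.sum_eq_zero this] at hP1
      norm_num at hP1
    obtain ⟨w0, hw0⟩ := hex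
    refine ⟨w0, fun w => ?_⟩
    by_cases hw : w = w0
    · simp [hw, hw0]
    · rw [if_neg hw]
      have hsplit : ∑ w', P w' = P w0 + ∑ w' ∈ Finset.univ.erase w0, P w' := by
        rw [← Finset.add_sum_erase _ _ (Finset.mem_univ w0)]
      rw [hsplit, hw0] at hP1
      have hrest : ∑ w' ∈ Finset.univ.erase w0, P w' = 0 := by linarith
      have := (Finset.sum_eq_zero_iff_of_nonneg (fun x _ => hP0 x)).1 hrest
      exact this w (Finset.mem_erase.2 ⟨hw, Finset.mem_univ w⟩)
  · rintro ⟨w0, hw0⟩ g w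
    have hsum : (∑ w', if g w' then P w' else 0)
        = (if g w0 then (1 : ℝ) else 0) := by
      rw [Finset.sum_eq_single w0]
      · simp [hw0]
      · intro b _ hb
        simp [hw0, hb]
      · simp
    simp only [Tg]
    rw [hsum]
    by_cases hw : w = w0
    · subst hw
      rw [hw0 w]
      by_cases hg : g w <;> simp [hg]
    · rw [hw0 w, if_neg hw]
      ring
end

section
/- Optimality of speculative sampling acceptance: let Q and P be probability distributions on a finite set W, and let A(·|·) be any Markov transition kernel on W satisfying Σ_{w'} A(w|w') Q(w') = P(w) for all w. Then the self-acceptance mass Σ_w A(w|w) Q(w) ≤ Σ_w min{P(w), Q(w)}. -/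
open scoped BigOperators

/-- Optimality of speculative sampling acceptance: any Markov transition kernel `A`
(`A w w'` is the probability of outputting `w` given draft `w'`) transporting `Q` to `P`
has self-acceptance mass at most `Σ_w min{P(w), Q(w)}`. -/
theorem stmt6 {W : Type*} [Fintype W]
    (P Q : W → ℝ)
    (hP0 : ∀ w, 0 ≤ P w) (hP1 : ∑ w, P w = 1)
    (hQ0 : ∀ w, 0 ≤ Q w) (hQ1 : ∑ w, Q w = 1)
    (A : W → W → ℝ)
    (hA0 : ∀ w w', 0 ≤ A w w')
    (hA1 : ∀ w', ∑ w, A w w' = 1)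
    (hAQ : ∀ w, ∑ w', A w w' * Q w' = P w) :
    ∑ w, A w w * Q w ≤ ∑ w, min (P w) (Q w) := by
  apply Finset.sum_le_sum
  intro w _
  refine le_min ?_ ?_
  · rw [← hAQ w]
    exact Finset.single_le_sum (fun w' _ => mul_nonneg (hA0 w w') (hQ0 w')) (Finset.mem_univ w)
  · calc A w w * Q w ≤ 1 * Q w := by
          apply mul_le_mul_of_nonneg_right _ (hQ0 w)
          rw [← hA1 w]
          exact Finset.single_le_sum (fun v _ => hA0 v w) (Finset.mem_univ w)
      _ = Q w := one_mul _
end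

section
/- Averaged coupling bound on speculative sampling efficiency: let ζ be a random variable, and Q_ζ, P_ζ random probability distributions on a finite set W with E_ζ[Q_ζ] = Q and E_ζ[P_ζ] = P. Then E_ζ[Σ_w min{Q_ζ(w), P_ζ(w)}] ≤ 1 − TV(Q, P). -/
open MeasureTheory
open scoped BigOperators

/-- Averaged coupling bound: for random distributions `Q_ζ, P_ζ` with `E[Q_ζ] = Q` and
`E[P_ζ] = P`, we have `E_ζ[Σ_w min{Q_ζ(w), P_ζ(w)}] ≤ 1 − TV(Q, P)`. -/
theorem stmt9 {W : Type*} [Fintype W] {Ω : Type*} [MeasurableSpace Ω]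
    (μ : Measure Ω) [IsProbabilityMeasure μ]
    (Q P : W → ℝ) (Qz Pz : Ω → W → ℝ)
    (hQ0 : ∀ w, 0 ≤ Q w) (hQ1 : ∑ w, Q w = 1)
    (hP0 : ∀ w, 0 ≤ P w) (hP1 : ∑ w, P w = 1)
    (hQz0 : ∀ ω w, 0 ≤ Qz ω w) (hQz1 : ∀ ω, ∑ w, Qz ω w = 1)
    (hPz0 : ∀ ω w, 0 ≤ Pz ω w) (hPz1 : ∀ ω, ∑ w, Pz ω w = 1)
    (hQmeas : ∀ w, Measurable fun ω => Qz ω w)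
    (hPmeas : ∀ w, Measurable fun ω => Pz ω w)
    (hQunb : ∀ w, ∫ ω, Qz ω w ∂μ = Q w)
    (hPunb : ∀ w, ∫ ω, Pz ω w ∂μ = P w) :
    ∫ ω, (∑ w, min (Qz ω w) (Pz ω w)) ∂μ ≤ 1 - (1 / 2) * ∑ w, |Q w - P w| := by
  -- bounds: Qz ω w ≤ 1
  have hQzub : ∀ ω w, Qz ω w ≤ 1 := by
    intro ω w
    calc Qz ω w ≤ ∑ v, Qz ω v :=
          Finset.single_le_sum (f := fun v => Qz ω v) (fun v _ => hQz0 ω v) (Finset.mem_univ w)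
      _ = 1 := hQz1 ω
  have hQint : ∀ w, Integrable (fun ω => Qz ω w) μ := by
    intro w
    refine ⟨(hQmeas w).aestronglyMeasurable, ?_⟩
    apply HasFiniteIntegral.of_bounded (C := 1)
    filter_upwards with ω
    rw [Real.norm_eq_abs, abs_of_nonneg (hQz0 ω w)]
    exact hQzub ω w
  have hPint : ∀ w, Integrable (fun ω => Pz ω w) μ := by
    intro w
    refine ⟨(hPmeas w).aestronglyMeasurable, ?_⟩
    apply HasFiniteIntegral.of_bounded (C := 1)
    filter_upwards with ω
    rw [Real.norm_eq_abs, abs_of_nonneg (hPz0 ω w)]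
    calc Pz ω w ≤ ∑ v, Pz ω v :=
          Finset.single_le_sum (f := fun v => Pz ω v) (fun v _ => hPz0 ω v) (Finset.mem_univ w)
      _ = 1 := hPz1 ω
  have hmint : ∀ w, Integrable (fun ω => min (Qz ω w) (Pz ω w)) μ := by
    intro w
    refine ⟨((hQmeas w).min (hPmeas w)).aestronglyMeasurable, ?_⟩
    apply HasFiniteIntegral.of_bounded (C := 1)
    filter_upwards with ω
    rw [Real.norm_eq_abs, abs_of_nonneg (le_min (hQz0 ω w) (hPz0 ω w))]
    exact le_trans (min_le_left _ _) (hQzub ω w)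
  have hswap : ∫ ω, (∑ w, min (Qz ω w) (Pz ω w)) ∂μ
      = ∑ w, ∫ ω, min (Qz ω w) (Pz ω w) ∂μ :=
    integral_finset_sum _ (fun w _ => hmint w)
  have hterm : ∀ w, ∫ ω, min (Qz ω w) (Pz ω w) ∂μ ≤ min (Q w) (P w) := by
    intro w
    refine le_min ?_ ?_
    · rw [← hQunb w]
      exact integral_mono (hmint w) (hQint w) (fun ω => min_le_left _ _)
    · rw [← hPunb w]
      exact integral_mono (hmint w) (hPint w) (fun ω => min_le_right _ _)
  calc ∫ ω, (∑ w, min (Qz ω w) (Pz ω w)) ∂μ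
      = ∑ w, ∫ ω, min (Qz ω w) (Pz ω w) ∂μ := hswap
    _ ≤ ∑ w, min (Q w) (P w) := Finset.sum_le_sum (fun w _ => hterm w)
    _ = 1 - (1 / 2) * ∑ w, |Q w - P w| := by
        have : ∀ w, min (Q w) (P w) = (Q w + P w - |Q w - P w|) / 2 := by
          intro w
          rcases le_total (Q w) (P w) with h | h
          · rw [min_eq_left h, abs_of_nonpos (by linarith)]; ring
          · rw [min_eq_right h, abs_of_nonneg (by linarith)]; ring
        simp_rw [this, sub_div, add_div, Finset.sum_sub_distrib, Finset.sum_add_distrib,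
          ← Finset.sum_div, hQ1, hP1, Finset.sum_div]
        rw [← Finset.sum_div]
        ring
end

section
/- Unbiasedness of watermarked speculative sampling with pseudorandom acceptance: let P, Q be distributions on a finite set W, let Q_{ζD}, R_{ζT} be random distributions with E[Q_{ζD}] = Q and E[R_{ζT}] = (P−Q)_+/TV(P,Q) (the normalized residual), and let u be Uniform(0,1), with ζD, ζT, u independent. Define the output distribution P'_ζ(w) = Q_{ζD}(w)·1{u < min(1, P(w)/Q(w))} + (1 − Σ_{w'} Q_{ζD}(w')·1{u < min(1, P(w')/Q(w'))})·R_{ζT}(w). Then E_ζ[P'_ζ(w)] = P(w) for all w ∈ W. -/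
open MeasureTheory
open scoped BigOperators

lemma aux_unif {m : ℝ} (hm0 : 0 ≤ m) (hm1 : m ≤ 1) :
    ∫ x, (if x < m then (1 : ℝ) else 0) ∂(volume.restrict (Set.Ioo (0 : ℝ) 1)) = m := by
  have h1 : (fun x : ℝ => if x < m then (1 : ℝ) else 0)
      = (Set.Iio m).indicator (1 : ℝ → ℝ) := by
    funext x; simp [Set.indicator, Set.mem_Iio]
  rw [h1]
  rw [integral_indicator_one measurableSet_Iio]
  rw [measureReal_def, Measure.restrict_apply measurableSet_Iio]
  have h2 : Set.Iio m ∩ Set.Ioo (0 : ℝ) 1 = Set.Ioo 0 m := by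
    ext x
    constructor
    · rintro ⟨hx, hx0, hx1⟩; exact ⟨hx0, hx⟩
    · rintro ⟨hx0, hxm⟩; exact ⟨hxm, hx0, lt_of_lt_of_le hxm hm1⟩
  rw [h2, Real.volume_Ioo, ENNReal.toReal_ofReal (by linarith)]
  ring

/-- Unbiasedness of watermarked speculative sampling with pseudorandom acceptance.
Independence of `ζD`, `ζT`, `u` is encoded by a product probability space. -/
theorem stmt14 {W : Type*} [Fintype W]
    {Ω1 Ω2 Ω3 : Type*} [MeasurableSpace Ω1] [MeasurableSpace Ω2] [MeasurableSpace Ω3]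
    (μ1 : Measure Ω1) (μ2 : Measure Ω2) (μ3 : Measure Ω3)
    [IsProbabilityMeasure μ1] [IsProbabilityMeasure μ2] [IsProbabilityMeasure μ3]
    (P Q : W → ℝ)
    (hP0 : ∀ w, 0 ≤ P w) (hP1 : ∑ w, P w = 1)
    (hQ0 : ∀ w, 0 < Q w) (hQ1 : ∑ w, Q w = 1)
    (hPQ : P ≠ Q)
    (Qz : Ω1 → W → ℝ) (R : Ω2 → W → ℝ) (u : Ω3 → ℝ)
    (hQz0 : ∀ ω w, 0 ≤ Qz ω w) (hQz1 : ∀ ω, ∑ w, Qz ω w = 1)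
    (hR0 : ∀ ω w, 0 ≤ R ω w) (hR1 : ∀ ω, ∑ w, R ω w = 1)
    (hQzmeas : ∀ w, Measurable fun ω => Qz ω w)
    (hRmeas : ∀ w, Measurable fun ω => R ω w)
    (humeas : Measurable u)
    (hu : Measure.map u μ3 = volume.restrict (Set.Ioo (0 : ℝ) 1))
    (hQunb : ∀ w, ∫ ω, Qz ω w ∂μ1 = Q w)
    (hRunb : ∀ w, ∫ ω, R ω w ∂μ2 = max (P w - Q w) 0 / ∑ z, max (P z - Q z) 0)
    (w : W) :
    ∫ ω : Ω1 × Ω2 × Ω3,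
        (Qz ω.1 w * (if u ω.2.2 < min 1 (P w / Q w) then (1 : ℝ) else 0)
          + (1 - ∑ w', Qz ω.1 w' * (if u ω.2.2 < min 1 (P w' / Q w') then (1 : ℝ) else 0))
              * R ω.2.1 w)
      ∂(μ1.prod (μ2.prod μ3)) = P w := by
  set m : W → ℝ := fun w' => min 1 (P w' / Q w') with hm
  have hm0 : ∀ w', 0 ≤ m w' := fun w' =>
    le_min zero_le_one (div_nonneg (hP0 w') (hQ0 w').le)
  have hm1 : ∀ w', m w' ≤ 1 := fun w' => min_le_left _ _
  -- integral of the indicator against μ3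
  have hI : ∀ w', ∫ ω, (if u ω < m w' then (1 : ℝ) else 0) ∂μ3 = m w' := by
    intro w'
    have hmeas : Measurable fun x : ℝ => if x < m w' then (1 : ℝ) else 0 := by
      exact Measurable.ite measurableSet_Iio measurable_const measurable_const
    calc ∫ ω, (if u ω < m w' then (1 : ℝ) else 0) ∂μ3
        = ∫ x, (if x < m w' then (1 : ℝ) else 0) ∂(Measure.map u μ3) :=
          (integral_map humeas.aemeasurable hmeas.aestronglyMeasurable).symm
      _ = m w' := by rw [hu]; exact aux_unif (hm0 w') (hm1 w')
  -- bounds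
  have hQzbd : ∀ ω w', |Qz ω w'| ≤ 1 := by
    intro ω w'
    rw [abs_of_nonneg (hQz0 ω w')]
    calc Qz ω w' = ∑ z ∈ {w'}, Qz ω z := by simp
    _ ≤ ∑ z, Qz ω z := Finset.sum_le_sum_of_subset_of_nonneg (Finset.subset_univ _)
        (fun z _ _ => hQz0 ω z)
    _ = 1 := hQz1 ω
  have hRbd : ∀ ω w', |R ω w'| ≤ 1 := by
    intro ω w'
    rw [abs_of_nonneg (hR0 ω w')]
    calc R ω w' = ∑ z ∈ {w'}, R ω z := by simp
    _ ≤ ∑ z, R ω z := Finset.sum_le_sum_of_subset_of_nonneg (Finset.subset_univ _)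
        (fun z _ _ => hR0 ω z)
    _ = 1 := hR1 ω
  -- helper: triple product integration and integrability
  have key : ∀ (f : Ω1 → ℝ) (g : Ω2 → ℝ) (h : Ω3 → ℝ), Measurable f → Measurable g →
      Measurable h → (∀ a, |f a| ≤ 1) → (∀ b, |g b| ≤ 1) → (∀ c, |h c| ≤ 1) →
      Integrable (fun ω : Ω1 × Ω2 × Ω3 => f ω.1 * (g ω.2.1 * h ω.2.2))
        (μ1.prod (μ2.prod μ3)) ∧
      ∫ ω : Ω1 × Ω2 × Ω3, f ω.1 * (g ω.2.1 * h ω.2.2) ∂(μ1.prod (μ2.prod μ3))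
        = (∫ a, f a ∂μ1) * ((∫ b, g b ∂μ2) * (∫ c, h c ∂μ3)) := by
    intro f g h hf hg hh hfb hgb hhb
    constructor
    · have hmeas : Measurable fun ω : Ω1 × Ω2 × Ω3 => f ω.1 * (g ω.2.1 * h ω.2.2) :=
        (hf.comp measurable_fst).mul
          ((hg.comp (measurable_fst.comp measurable_snd)).mul
            (hh.comp (measurable_snd.comp measurable_snd)))
      refine (integrable_const (1 : ℝ)).mono' hmeas.aestronglyMeasurable ?_
      filter_upwards with ω
      calc |f ω.1 * (g ω.2.1 * h ω.2.2)| = |f ω.1| * (|g ω.2.1| * |h ω.2.2|) := by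
            rw [abs_mul, abs_mul]
      _ ≤ 1 * (1 * 1) := by
            gcongr <;> [exact hfb _; exact hgb _; exact hhb _]
      _ = 1 := by ring
    · rw [integral_prod_mul f (fun p : Ω2 × Ω3 => g p.1 * h p.2),
        integral_prod_mul g h]
  set TV : ℝ := ∑ z, max (P z - Q z) 0 with hTVdef
  have hTVpos : 0 < TV := by
    rcases lt_or_eq_of_le (Finset.sum_nonneg (fun z _ => le_max_right _ _) :
        (0:ℝ) ≤ TV) with h | h
    · exact h
    · exfalso
      have hz : ∀ z ∈ Finset.univ, max (P z - Q z) 0 = 0 := by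
        intro z _
        exact (Finset.sum_eq_zero_iff_of_nonneg (fun z _ => le_max_right _ _)).1 h.symm z
          (Finset.mem_univ z)
      have hle : ∀ z, P z ≤ Q z := by
        intro z
        have := hz z (Finset.mem_univ z)
        have : P z - Q z ≤ 0 := by
          by_contra hc
          push_neg at hc
          rw [max_eq_left hc.le] at this
          linarith
        linarith
      apply hPQ
      funext z
      by_contra hne
      have hlt : P z < Q z := lt_of_le_of_ne (hle z) hne
      have : ∑ x, P x < ∑ x, Q x :=
        Finset.sum_lt_sum (fun i _ => hle i) ⟨z, Finset.mem_univ z, hlt⟩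
      rw [hP1, hQ1] at this
      exact lt_irrefl 1 this
  -- min identity
  have hQm : ∀ w', Q w' * m w' = min (P w') (Q w') := by
    intro w'
    rw [hm]
    rw [mul_min_of_nonneg _ _ (hQ0 w').le, mul_one,
      mul_div_cancel₀ _ (hQ0 w').ne', min_comm]
  -- rewrite integrand
  have hfun : (fun ω : Ω1 × Ω2 × Ω3 =>
      (Qz ω.1 w * (if u ω.2.2 < m w then (1 : ℝ) else 0)
        + (1 - ∑ w', Qz ω.1 w' * (if u ω.2.2 < m w' then (1 : ℝ) else 0)) * R ω.2.1 w))
      = fun ω : Ω1 × Ω2 × Ω3 =>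
      (Qz ω.1 w * ((1 : ℝ) * (if u ω.2.2 < m w then (1 : ℝ) else 0))
        + ((1 : ℝ) * (R ω.2.1 w * 1)
          - ∑ w', Qz ω.1 w' * (R ω.2.1 w * (if u ω.2.2 < m w' then (1 : ℝ) else 0)))) := by
    funext ω
    rw [sub_mul, one_mul, Finset.sum_mul]
    have hs : ∑ w', (Qz ω.1 w' * if u ω.2.2 < m w' then (1:ℝ) else 0) * R ω.2.1 w
        = ∑ w', Qz ω.1 w' * (R ω.2.1 w * if u ω.2.2 < m w' then (1:ℝ) else 0) :=
      Finset.sum_congr rfl (fun z _ => by ring)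
    rw [hs]
    ring
  rw [hfun]
  -- integrability and values of the pieces
  have kA := key (fun a => Qz a w) (fun _ => (1 : ℝ)) (fun c => if u c < m w then (1:ℝ) else 0)
    (hQzmeas w) measurable_const
    ((measurable_const.ite (humeas measurableSet_Iio) measurable_const))
    (fun a => hQzbd a w) (fun _ => by norm_num)
    (fun c => by split <;> norm_num)
  have kB := key (fun _ => (1 : ℝ)) (fun b => R b w) (fun _ => (1 : ℝ))
    measurable_const (hRmeas w) measurable_const
    (fun _ => by norm_num) (fun b => hRbd b w) (fun _ => by norm_num)
  have kC : ∀ w', Integrable (fun ω : Ω1 × Ω2 × Ω3 =>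
      Qz ω.1 w' * (R ω.2.1 w * (if u ω.2.2 < m w' then (1:ℝ) else 0)))
      (μ1.prod (μ2.prod μ3)) ∧
      ∫ ω : Ω1 × Ω2 × Ω3, Qz ω.1 w' * (R ω.2.1 w * (if u ω.2.2 < m w' then (1:ℝ) else 0))
        ∂(μ1.prod (μ2.prod μ3))
        = Q w' * ((max (P w - Q w) 0 / TV) * m w') := by
    intro w'
    have := key (fun a => Qz a w') (fun b => R b w) (fun c => if u c < m w' then (1:ℝ) else 0)
      (hQzmeas w') (hRmeas w)
      ((measurable_const.ite (humeas measurableSet_Iio) measurable_const))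
      (fun a => hQzbd a w') (fun b => hRbd b w)
      (fun c => by split <;> norm_num)
    refine ⟨this.1, ?_⟩
    rw [this.2, hQunb, hRunb, hI]
  have intC : Integrable (fun ω : Ω1 × Ω2 × Ω3 =>
      ∑ w', Qz ω.1 w' * (R ω.2.1 w * (if u ω.2.2 < m w' then (1:ℝ) else 0)))
      (μ1.prod (μ2.prod μ3)) :=
    integrable_finset_sum _ (fun w' _ => (kC w').1)
  beta_reduce at kA kB
  have hBC : Integrable (fun ω : Ω1 × Ω2 × Ω3 =>
      1 * (R ω.2.1 w * 1)
        - ∑ w', Qz ω.1 w' * (R ω.2.1 w * if u ω.2.2 < m w' then (1:ℝ) else 0))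
      (μ1.prod (μ2.prod μ3)) := (kB.1).sub intC
  rw [integral_add kA.1 hBC, integral_sub kB.1 intC,
    integral_finset_sum _ (fun w' _ => (kC w').1)]
  rw [kA.2, kB.2]
  have hsum : ∑ w', ∫ ω : Ω1 × Ω2 × Ω3,
      Qz ω.1 w' * (R ω.2.1 w * (if u ω.2.2 < m w' then (1:ℝ) else 0))
      ∂(μ1.prod (μ2.prod μ3)) = ∑ w', Q w' * ((max (P w - Q w) 0 / TV) * m w') :=
    Finset.sum_congr rfl (fun w' _ => (kC w').2)
  rw [hsum, hQunb, hRunb, hI, integral_const, integral_const, integral_const]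
  simp only [measure_univ, probReal_univ, ENNReal.toReal_one, smul_eq_mul, one_mul, mul_one]
  -- now pure algebra
  have hsum2 : ∑ w', Q w' * (max (P w - Q w) 0 / TV * m w')
      = (max (P w - Q w) 0 / TV) * ∑ w', min (P w') (Q w') := by
    rw [Finset.mul_sum]
    exact Finset.sum_congr rfl (fun w' _ => by rw [← hQm w']; ring)
  rw [hsum2, hQm w]
  have hminsum : ∑ w', min (P w') (Q w') = 1 - TV := by
    have : ∀ w', min (P w') (Q w') = P w' - max (P w' - Q w') 0 := by
      intro w'
      rcases le_total (P w') (Q w') with h | h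
      · rw [min_eq_left h, max_eq_right (by linarith)]; ring
      · rw [min_eq_right h, max_eq_left (by linarith)]; ring
    rw [Finset.sum_congr rfl (fun w' _ => this w'), Finset.sum_sub_distrib, hP1, hTVdef]
  rw [hminsum]
  have hr : max (P w - Q w) 0 / TV - max (P w - Q w) 0 / TV * (1 - TV)
      = max (P w - Q w) 0 := by
    have h1 : max (P w - Q w) 0 / TV - max (P w - Q w) 0 / TV * (1 - TV)
        = max (P w - Q w) 0 / TV * TV := by ring
    rw [h1, div_mul_cancel₀ _ hTVpos.ne']
  rw [hr]
  rcases le_total (P w) (Q w) with h | h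
  · rw [min_eq_left h, max_eq_right (by linarith)]; ring
  · rw [min_eq_right h, max_eq_left (by linarith)]; ring
end

section
/- With pseudorandom acceptance, the sampling efficiency is preserved: under the setup of the pseudorandom-acceptance algorithm, E_{ζD, u}[Σ_w Q_{ζD}(w)·1{u < min(1, P(w)/Q(w))}] = Σ_w min{P(w), Q(w)} = 1 − TV(Q, P). -/
open MeasureTheory
open scoped BigOperators

/-- With pseudorandom acceptance, sampling efficiency is preserved: the expected
acceptance probability equals `Σ_w min{P(w), Q(w)} = 1 − TV(Q, P)`. -/
theorem stmt15 {W : Type*} [Fintype W]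
    {Ω1 Ω3 : Type*} [MeasurableSpace Ω1] [MeasurableSpace Ω3]
    (μ1 : Measure Ω1) (μ3 : Measure Ω3)
    [IsProbabilityMeasure μ1] [IsProbabilityMeasure μ3]
    (P Q : W → ℝ)
    (hP0 : ∀ w, 0 ≤ P w) (hP1 : ∑ w, P w = 1)
    (hQ0 : ∀ w, 0 < Q w) (hQ1 : ∑ w, Q w = 1)
    (Qz : Ω1 → W → ℝ) (u : Ω3 → ℝ)
    (hQz0 : ∀ ω w, 0 ≤ Qz ω w) (hQz1 : ∀ ω, ∑ w, Qz ω w = 1)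
    (hQzmeas : ∀ w, Measurable fun ω => Qz ω w)
    (humeas : Measurable u)
    (hu : Measure.map u μ3 = volume.restrict (Set.Ioo (0 : ℝ) 1))
    (hQunb : ∀ w, ∫ ω, Qz ω w ∂μ1 = Q w) :
    (∫ ω : Ω1 × Ω3,
        (∑ w, Qz ω.1 w * (if u ω.2 < min 1 (P w / Q w) then (1 : ℝ) else 0))
      ∂(μ1.prod μ3) = ∑ w, min (P w) (Q w)) ∧
    (∑ w, min (P w) (Q w) = 1 - (1 / 2) * ∑ w, |Q w - P w|) := by
  have hQzle : ∀ ω w, Qz ω w ≤ 1 := by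
    intro ω w
    calc Qz ω w ≤ ∑ w', Qz ω w' :=
      Finset.single_le_sum (fun w' _ => hQz0 ω w') (Finset.mem_univ w)
    _ = 1 := hQz1 ω
  -- integral of indicator under u
  have hind : ∀ w : W, ∫ ω, (if u ω < min 1 (P w / Q w) then (1:ℝ) else 0) ∂μ3
      = min 1 (P w / Q w) := by
    intro w
    set m := min 1 (P w / Q w) with hm
    have hm0 : 0 ≤ m := le_min zero_le_one (div_nonneg (hP0 w) (hQ0 w).le)
    have hm1 : m ≤ 1 := min_le_left _ _
    have h1 : (fun ω => if u ω < m then (1:ℝ) else 0)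
        = fun ω => Set.indicator (Set.Iio m) (1 : ℝ → ℝ) (u ω) := by
      funext ω
      by_cases h : u ω < m <;> simp [Set.indicator, Set.mem_Iio, h]
    rw [h1]
    have h2 : ∫ ω, Set.indicator (Set.Iio m) (1 : ℝ → ℝ) (u ω) ∂μ3
        = ∫ x, Set.indicator (Set.Iio m) (1 : ℝ → ℝ) x ∂(Measure.map u μ3) := by
      rw [integral_map humeas.aemeasurable]
      exact (measurable_one.indicator measurableSet_Iio).aestronglyMeasurable
    rw [h2, hu, integral_indicator_one measurableSet_Iio, measureReal_def,
      Measure.restrict_apply measurableSet_Iio]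
    have : Set.Iio m ∩ Set.Ioo (0:ℝ) 1 = Set.Ioo 0 m := by
      ext x
      simp only [Set.mem_inter_iff, Set.mem_Iio, Set.mem_Ioo]
      constructor
      · rintro ⟨h1, h2, h3⟩; exact ⟨h2, h1⟩
      · rintro ⟨h1, h2⟩; exact ⟨h2, h1, lt_of_lt_of_le h2 hm1⟩
    rw [this, Real.volume_Ioo, ENNReal.toReal_ofReal (by linarith), sub_zero]
  have hInt : ∀ w : W, Integrable (fun ω : Ω1 × Ω3 =>
      Qz ω.1 w * (if u ω.2 < min 1 (P w / Q w) then (1:ℝ) else 0)) (μ1.prod μ3) := by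
    intro w
    have hmeas : Measurable (fun ω : Ω1 × Ω3 =>
        Qz ω.1 w * (if u ω.2 < min 1 (P w / Q w) then (1:ℝ) else 0)) := by
      apply ((hQzmeas w).comp measurable_fst).mul
      have : Measurable (fun x : ℝ => if x < min 1 (P w / Q w) then (1:ℝ) else 0) :=
        measurable_one.ite measurableSet_Iio measurable_const
      exact this.comp (humeas.comp measurable_snd)
    apply Integrable.mono' (integrable_const (1:ℝ)) hmeas.aestronglyMeasurable
    filter_upwards with ω
    rw [Real.norm_eq_abs, abs_mul]
    have h1 : |Qz ω.1 w| ≤ 1 := by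
      rw [abs_of_nonneg (hQz0 ω.1 w)]; exact hQzle ω.1 w
    have h2 : |(if u ω.2 < min 1 (P w / Q w) then (1:ℝ) else 0)| ≤ 1 := by
      split <;> simp
    calc |Qz ω.1 w| * |(if u ω.2 < min 1 (P w / Q w) then (1:ℝ) else 0)|
        ≤ 1 * 1 := mul_le_mul h1 h2 (abs_nonneg _) zero_le_one
      _ = 1 := one_mul 1
  constructor
  · rw [integral_finset_sum _ (fun w _ => hInt w)]
    refine Finset.sum_congr rfl fun w _ => ?_
    rw [integral_prod_mul (f := fun ω1 => Qz ω1 w)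
      (g := fun ω3 => if u ω3 < min 1 (P w / Q w) then (1:ℝ) else 0),
      hQunb w, hind w]
    rw [mul_min_of_nonneg _ _ (hQ0 w).le, mul_one,
      mul_div_cancel₀ _ (hQ0 w).ne', min_comm]
  · have : ∀ w : W, min (P w) (Q w) = (P w + Q w - |Q w - P w|) / 2 := by
      intro w
      rcases le_total (P w) (Q w) with h | h
      · rw [min_eq_left h, abs_of_nonneg (by linarith)]; ring
      · rw [min_eq_right h, abs_of_nonpos (by linarith)]; ring
    simp only [this]
    rw [← Finset.sum_div, Finset.sum_sub_distrib, Finset.sum_add_distrib, hP1, hQ1]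
    ring
end

section
/- If Q_{ζD} and R_{ζT} are almost surely degenerate (point masses), then the output distribution P'_ζ of the pseudorandom-acceptance speculative sampler is almost surely degenerate; consequently its watermark strength E_ζ[KL(P'_ζ || P)] equals Ent(P). -/
open MeasureTheory
open scoped BigOperators

/-- If the watermarked draft `Q_ζ` and residual distribution `R_ζ` are a.s. degenerate,
then the output distribution `P'_ζ` of the pseudorandom-acceptance speculative sampler
is a.s. degenerate, and its watermark strength `E_ζ[KL(P'_ζ ‖ P)]` equals `Ent(P)`. -/
theorem stmt16 {W : Type*} [Fintype W] [DecidableEq W]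
    {Ω : Type*} [MeasurableSpace Ω] (μ : Measure Ω) [IsProbabilityMeasure μ]
    (P Q : W → ℝ)
    (hP0 : ∀ w, 0 ≤ P w) (hP1 : ∑ w, P w = 1)
    (hQ0 : ∀ w, 0 < Q w) (hQ1 : ∑ w, Q w = 1)
    (Qz R P' : Ω → W → ℝ) (u : Ω → ℝ)
    (hQz0 : ∀ ω w, 0 ≤ Qz ω w) (hQz1 : ∀ ω, ∑ w, Qz ω w = 1)
    (hR0 : ∀ ω w, 0 ≤ R ω w) (hR1 : ∀ ω, ∑ w, R ω w = 1)
    (hP'meas : ∀ w, Measurable fun ω => P' ω w)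
    (hQdeg : ∀ᵐ ω ∂μ, ∃ w0, ∀ w, Qz ω w = if w = w0 then 1 else 0)
    (hRdeg : ∀ᵐ ω ∂μ, ∃ w0, ∀ w, R ω w = if w = w0 then 1 else 0)
    (hform : ∀ᵐ ω ∂μ, ∃ w', Qz ω w' = 1 ∧ ∀ w,
      P' ω w = Qz ω w * (if u ω < min 1 (P w' / Q w') then (1 : ℝ) else 0)
        + R ω w * (if u ω < min 1 (P w' / Q w') then (0 : ℝ) else 1))
    (hunb : ∀ w, ∫ ω, P' ω w ∂μ = P w)
    (hKLint : Integrable (fun ω => KL (P' ω) P) μ) :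
    (∀ᵐ ω ∂μ, ∃ w0, ∀ w, P' ω w = if w = w0 then 1 else 0) ∧
      ∫ ω, KL (P' ω) P ∂μ = Ent P := by
  have hdeg : ∀ᵐ ω ∂μ, ∃ w0, ∀ w, P' ω w = if w = w0 then 1 else 0 := by
    filter_upwards [hQdeg, hRdeg, hform] with ω hq hr hf
    obtain ⟨wq, hq⟩ := hq
    obtain ⟨wr, hr⟩ := hr
    obtain ⟨w', hw1, hw⟩ := hf
    by_cases h : u ω < min 1 (P w' / Q w')
    · exact ⟨wq, fun w => by simp [hw w, h, hq w]⟩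
    · exact ⟨wr, fun w => by simp [hw w, h, hr w]⟩
  refine ⟨hdeg, ?_⟩
  have hPi : ∀ w, Integrable (fun ω => P' ω w) μ := by
    intro w
    refine (integrable_const (1 : ℝ)).mono' (hP'meas w).aestronglyMeasurable ?_
    filter_upwards [hdeg] with ω h
    obtain ⟨w0, h0⟩ := h
    rw [h0 w]
    split <;> simp
  have hae : (fun ω => KL (P' ω) P) =ᵐ[μ] fun ω => ∑ w, -(P' ω w * Real.log (P w)) := by
    filter_upwards [hdeg] with ω h
    obtain ⟨w0, h0⟩ := h
    unfold KL
    refine Finset.sum_congr rfl fun w _ => ?_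
    rw [h0 w]
    by_cases hw : w = w0 <;> simp [hw, one_div, Real.log_inv]
  rw [integral_congr_ae hae,
    integral_finset_sum (f := fun w ω => -(P' ω w * Real.log (P w))) _
      (fun w _ => ((hPi w).mul_const _).neg)]
  unfold Ent
  rw [← Finset.sum_neg_distrib]
  refine Finset.sum_congr rfl fun w _ => ?_
  rw [integral_neg, integral_mul_const, hunb w]
end

section
/- For the Gumbel-max watermark, if (U_w)_{w∈W} are i.i.d. Uniform(0,1), P is a distribution on W with positive entries, and w* = argmax_w (log U_w)/P_w, then U_{w*} is stochastically larger than Uniform(0,1), i.e. P(U_{w*} ≤ u) ≤ u for all u ∈ [0,1]. -/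
open MeasureTheory ProbabilityTheory
open scoped BigOperators

/-- For the Gumbel-max watermark, the selected uniform value stochastically dominates
`Uniform(0,1)`: if `w*` is the (a.s. unique strict) argmax of `log (U w) / P w`, then
`P(U_{w*} ≤ u) ≤ u` for all `u ∈ [0,1]`. -/
theorem stmt19 {W : Type*} [Fintype W] [Nonempty W]
    {Ω : Type*} [MeasurableSpace Ω] (μ : Measure Ω) [IsProbabilityMeasure μ]
    (P : W → ℝ) (hP0 : ∀ w, 0 < P w) (hP1 : ∑ w, P w = 1)
    (U : W → Ω → ℝ) (hUmeas : ∀ w, Measurable (U w))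
    (hUnif : ∀ w, Measure.map (U w) μ = volume.restrict (Set.Ioo (0 : ℝ) 1))
    (hIndep : iIndepFun U μ)
    (u : ℝ) (hu : u ∈ Set.Icc (0 : ℝ) 1) :
    μ {ω | ∃ w, (∀ w', w' ≠ w → Real.log (U w' ω) / P w' < Real.log (U w ω) / P w)
        ∧ U w ω ≤ u} ≤ ENNReal.ofReal u := by
  obtain ⟨hu0, hu1⟩ := hu
  have hPle1 : ∀ w, P w ≤ 1 := by
    intro w
    rw [← hP1]
    exact Finset.single_le_sum (fun i _ => (hP0 i).le) (Finset.mem_univ w)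
  -- the good full-measure set: all `U w` lie in `(0,1)`
  set G : Set Ω := ⋂ w, U w ⁻¹' Set.Ioo (0 : ℝ) 1 with hG
  have hGae : ∀ᵐ ω ∂μ, ω ∈ G := by
    rw [ae_iff]
    have hcompl : Gᶜ = ⋃ w, (U w ⁻¹' Set.Ioo (0 : ℝ) 1)ᶜ := by
      simp [hG, Set.compl_iInter]
    have hnull : ∀ w, μ ((U w ⁻¹' Set.Ioo (0 : ℝ) 1)ᶜ) = 0 := by
      intro w
      have hpre : μ (U w ⁻¹' Set.Ioo (0 : ℝ) 1) = 1 := by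
        have h1 : μ (U w ⁻¹' Set.Ioo (0 : ℝ) 1)
            = Measure.map (U w) μ (Set.Ioo (0 : ℝ) 1) :=
          (Measure.map_apply (hUmeas w) measurableSet_Ioo).symm
        rw [h1, hUnif w, Measure.restrict_apply measurableSet_Ioo, Set.inter_self,
          Real.volume_Ioo]
        norm_num
      have hc := measure_compl (μ := μ) (s := U w ⁻¹' Set.Ioo (0 : ℝ) 1)
          (hUmeas w measurableSet_Ioo) (measure_ne_top μ _)
      rw [hpre, measure_univ] at hc
      simpa using hc
    have : μ Gᶜ = 0 := by
      rw [hcompl]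
      exact measure_iUnion_null hnull
    exact this
  -- the target set
  set S : Set Ω := ⋂ w, U w ⁻¹' Set.Iic (u ^ P w) with hS
  have hsub : {ω | ∃ w, (∀ w', w' ≠ w →
      Real.log (U w' ω) / P w' < Real.log (U w ω) / P w) ∧ U w ω ≤ u} ≤ᵐ[μ] S := by
    filter_upwards [hGae] with ω hωG hωE
    obtain ⟨w, hmax, hle⟩ := hωE
    have hU : ∀ w', U w' ω ∈ Set.Ioo (0 : ℝ) 1 := fun w' => Set.mem_iInter.1 hωG w'
    have hupos : 0 < u := lt_of_lt_of_le (hU w).1 hle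
    have hlogu : Real.log u ≤ 0 := Real.log_nonpos hupos.le hu1
    refine Set.mem_iInter.2 fun w' => ?_
    simp only [Set.mem_preimage, Set.mem_Iic]
    have hkey : Real.log (U w' ω) / P w' ≤ Real.log (U w ω) / P w := by
      rcases eq_or_ne w' w with rfl | hne
      · exact le_refl _
      · exact (hmax w' hne).le
    have hlogw : Real.log (U w ω) ≤ Real.log u := Real.log_le_log (hU w).1 hle
    have h2 : Real.log (U w ω) / P w ≤ Real.log u := by
      rw [div_le_iff₀ (hP0 w)]
      nlinarith [hP0 w, hPle1 w]
    have h1 : Real.log (U w' ω) ≤ P w' * Real.log u := by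
      have := (div_le_iff₀ (hP0 w')).1 (hkey.trans h2)
      linarith
    have hgoal : Real.log (U w' ω) ≤ Real.log (u ^ P w') := by
      rw [Real.log_rpow hupos]; linarith
    have hrpos : 0 < u ^ P w' := Real.rpow_pos_of_pos hupos _
    exact (Real.log_le_log_iff (hU w').1 hrpos).1 hgoal
  calc μ {ω | ∃ w, (∀ w', w' ≠ w →
        Real.log (U w' ω) / P w' < Real.log (U w ω) / P w) ∧ U w ω ≤ u}
      ≤ μ S := measure_mono_ae hsub
    _ = ∏ w, μ (U w ⁻¹' Set.Iic (u ^ P w)) := by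
        refine hIndep.meas_iInter (fun w => ?_)
        exact ⟨Set.Iic (u ^ P w), measurableSet_Iic, rfl⟩
    _ = ∏ w, ENNReal.ofReal (u ^ P w) := by
        refine Finset.prod_congr rfl (fun w _ => ?_)
        have h1 : μ (U w ⁻¹' Set.Iic (u ^ P w))
            = Measure.map (U w) μ (Set.Iic (u ^ P w)) :=
          (Measure.map_apply (hUmeas w) measurableSet_Iic).symm
        rw [h1, hUnif w, Measure.restrict_apply measurableSet_Iic]
        have ht0 : 0 ≤ u ^ P w := Real.rpow_nonneg hu0 _
        have ht1 : u ^ P w ≤ 1 := Real.rpow_le_one hu0 hu1 (hP0 w).le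
        refine le_antisymm ?_ ?_
        · have : Set.Iic (u ^ P w) ∩ Set.Ioo 0 1 ⊆ Set.Ioc 0 (u ^ P w) := by
            rintro x ⟨hx1, hx2, _⟩; exact ⟨hx2, hx1⟩
          calc volume (Set.Iic (u ^ P w) ∩ Set.Ioo 0 1) ≤ volume (Set.Ioc 0 (u ^ P w)) :=
                measure_mono this
            _ = ENNReal.ofReal (u ^ P w) := by rw [Real.volume_Ioc, sub_zero]
        · have : Set.Ioo 0 (u ^ P w) ⊆ Set.Iic (u ^ P w) ∩ Set.Ioo 0 1 := by
            rintro x ⟨hx1, hx2⟩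
            exact ⟨hx2.le, hx1, lt_of_lt_of_le hx2 ht1⟩
          calc ENNReal.ofReal (u ^ P w) = volume (Set.Ioo 0 (u ^ P w)) := by
                rw [Real.volume_Ioo, sub_zero]
            _ ≤ volume (Set.Iic (u ^ P w) ∩ Set.Ioo 0 1) := measure_mono this
    _ = ENNReal.ofReal (∏ w, u ^ P w) :=
        (ENNReal.ofReal_prod_of_nonneg (fun w _ => Real.rpow_nonneg hu0 _)).symm
    _ = ENNReal.ofReal u := by
        rw [← Real.rpow_sum_of_nonneg hu0 (fun w _ => (hP0 w).le), hP1, Real.rpow_one]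
end
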